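/- arXiv:0807.1620 — 2 statements merged into one kernel-verified Lean document; each statement's English description precedes it below -/
import Mathlib

section
/- Let G be a connected simple graph and C a cycle in G. If there exist two vertices x, y on C such that the distance between x and y along C (the shorter arc) is strictly greater than the distance d_G(x,y) in G, then C is the symmetric difference (edge-wise) of two cycles each of length strictly less than the length of C. -/
/-!
Among the pairs `u, v` on `C` with `d_G(u, v) < d_C(u, v)` pick one minimising `d_G(u, v)`, and
a shortest path `Q` from `u` to `v`. By minimality `Q` meets `C` only at `u` and `v`, so `Q` and
either arc of `C` between `u` and `v` close up to a cycle. Both arcs are longer than `Q`, so both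
cycles are shorter than `C`, and their symmetric difference is `C` since `Q` cancels.
-/

open SimpleGraph

/-- Distance along a cycle `c`: graph distance in the graph formed by the edges of `c`
(for a cycle this is the minimum of the lengths of the two arcs). -/
noncomputable def cycDist {V : Type*} {G : SimpleGraph V} {a : V} (c : G.Walk a a)
    (x y : V) : ℕ :=
  (SimpleGraph.fromEdgeSet {e | e ∈ c.edges}).dist x y

namespace SimpleGraph.Walk

variable {V : Type*} {G : SimpleGraph V} {a u v : V}

lemma IsPath.start_notMem_tail_support {p : G.Walk u v} (hp : p.IsPath) :
    u ∉ p.support.tail := by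
  have := hp.support_nodup
  rw [← cons_tail_support, List.nodup_cons] at this
  exact this.1

lemma IsPath.isCycle_append_of_internally_disjoint {p : G.Walk u v} {q : G.Walk v u}
    (hp : p.IsPath) (hq : q.IsPath) (hpq : ∀ w ∈ p.support, w ∈ q.support → w = u ∨ w = v)
    (hn : 1 < p.length ∨ 1 < q.length) : (p.append q).IsCycle := by
  refine hp.isCycle_append hq (fun w hwp hwq => ?_) hn
  rcases hpq w (List.mem_of_mem_tail hwp) (List.mem_of_mem_tail hwq) with rfl | rfl
  · exact hp.start_notMem_tail_support hwp
  · exact hq.start_notMem_tail_support hwq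

lemma IsCycle.exists_append_of_mem_support {c : G.Walk a a} (hc : c.IsCycle) (hu : u ∈ c.support)
    (hv : v ∈ c.support) :
    ∃ (p : G.Walk u v) (q : G.Walk v u), (p.append q).IsCycle ∧
      p.length + q.length = c.length ∧
      (∀ e, e ∈ c.edges ↔ e ∈ p.edges ∨ e ∈ q.edges) ∧
      (∀ w, w ∈ c.support ↔ w ∈ p.support ∨ w ∈ q.support) := by
  classical
  have hv' : v ∈ (c.rotate u hu).support := (c.mem_support_rotate_iff u hu).mpr hv
  have hspec := (c.rotate u hu).take_spec hv'
  refine ⟨_, _, hspec ▸ hc.rotate hu, ?_, fun e => ?_, fun w => ?_⟩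
  · rw [← length_append, hspec, length_rotate]
  · rw [← List.mem_append, ← edges_append, hspec, (c.rotate_edges u hu).mem_iff]
  · rw [← mem_support_append_iff, hspec, mem_support_rotate_iff]

lemma edges_subset_edgeSet_fromEdgeSet (p : G.Walk u v) {s : Set (Sym2 V)}
    (hp : ∀ e ∈ p.edges, e ∈ s) : ∀ e ∈ p.edges, e ∈ (fromEdgeSet s).edgeSet := by
  intro e he
  rw [edgeSet_fromEdgeSet]
  exact ⟨hp e he, G.not_isDiag_of_mem_edgeSet (p.edges_subset_edgeSet he)⟩

lemma reachable_fromEdgeSet_edges_of_mem_support {w : V} (p : G.Walk v w)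
    (hu : u ∈ p.support) : (fromEdgeSet {e | e ∈ p.edges}).Reachable v u := by
  classical
  exact ⟨(p.takeUntil u hu).transfer _ <| (p.takeUntil u hu).edges_subset_edgeSet_fromEdgeSet
    fun _ => (p.edges_takeUntil_subset_edges hu ·)⟩

end SimpleGraph.Walk

section CycDist

variable {V : Type*} {G : SimpleGraph V} {a u v w : V} {c : G.Walk a a}

lemma cycDist_le_length (p : G.Walk u v) (hp : ∀ e ∈ p.edges, e ∈ c.edges) :
    cycDist c u v ≤ p.length :=
  (dist_le (p.transfer _ (p.edges_subset_edgeSet_fromEdgeSet hp))).trans_eq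
    (p.length_transfer _)

lemma cycDist_triangle (hv : v ∈ c.support) (hw : w ∈ c.support) :
    cycDist c u w ≤ cycDist c u v + cycDist c v w :=
  ((c.reachable_fromEdgeSet_edges_of_mem_support hv).symm.trans
    (c.reachable_fromEdgeSet_edges_of_mem_support hw)).dist_triangle_right u

end CycDist

section Shortcut

variable {V : Type*} {G : SimpleGraph V} {a u v : V} {c : G.Walk a a}

def IsShortcut (c : G.Walk a a) (u v : V) : Prop :=
  u ∈ c.support ∧ v ∈ c.support ∧ G.dist u v < cycDist c u v

lemma IsShortcut.exists_dist_minimal {x y : V} (h : IsShortcut c x y) :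
    ∃ u v, IsShortcut c u v ∧
      ∀ u' v', IsShortcut c u' v' → G.dist u v ≤ G.dist u' v' := by
  obtain ⟨⟨u, v⟩, huv, hmin⟩ := (measure fun p : V × V => G.dist p.1 p.2).wf.has_min
    {p | IsShortcut c p.1 p.2} ⟨(x, y), h⟩
  exact ⟨u, v, huv, fun u' v' h' => not_lt.mp (hmin (u', v') h')⟩

lemma IsShortcut.reachable (h : IsShortcut c u v) : G.Reachable u v := by
  classical
  exact (c.takeUntil u h.1).reachable.symm.trans (c.takeUntil v h.2.1).reachable

/-- An inner vertex `z` of `Q` on `c` would give two closer pairs `u, z` and `z, v`, which are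
not shortcuts by minimality; the triangle inequality for `cycDist` then contradicts
`IsShortcut c u v`. -/
lemma IsShortcut.eq_or_eq_of_mem_support_of_minimal (h : IsShortcut c u v)
    (hmin : ∀ u' v', IsShortcut c u' v' → G.dist u v ≤ G.dist u' v')
    {Q : G.Walk u v} (hQ : Q.length = G.dist u v) {z : V} (hzQ : z ∈ Q.support)
    (hzc : z ∈ c.support) : z = u ∨ z = v := by
  classical
  by_contra! hz
  obtain ⟨hu, hv, hlt⟩ := h
  have hlen : (Q.takeUntil z hzQ).length + (Q.dropUntil z hzQ).length = Q.length := by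
    rw [← Walk.length_append, Q.take_spec]
  have htake : 0 < (Q.takeUntil z hzQ).length :=
    Nat.pos_of_ne_zero fun h0 => hz.1 (Walk.eq_of_length_eq_zero h0).symm
  have hdrop : 0 < (Q.dropUntil z hzQ).length :=
    Nat.pos_of_ne_zero fun h0 => hz.2 (Walk.eq_of_length_eq_zero h0)
  have h₁ : cycDist c u z ≤ (Q.takeUntil z hzQ).length := by
    have := dist_le (Q.takeUntil z hzQ)
    by_contra! hgt
    have := hmin u z ⟨hu, hzc, by omega⟩
    omega
  have h₂ : cycDist c z v ≤ (Q.dropUntil z hzQ).length := by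
    have := dist_le (Q.dropUntil z hzQ)
    by_contra! hgt
    have := hmin z v ⟨hzc, hv, by omega⟩
    omega
  have := cycDist_triangle (u := u) hzc hv
  omega

end Shortcut

namespace SimpleGraph.Walk

variable {V : Type*} {G : SimpleGraph V} {a u v : V}

lemma IsCycle.exists_symmDiff_of_path_lt_cycDist {c : G.Walk a a} (hc : c.IsCycle)
    (hu : u ∈ c.support) (hv : v ∈ c.support) {Q : G.Walk u v} (hQ : Q.IsPath)
    (hQlt : Q.length < cycDist c u v)
    (hQc : ∀ w ∈ Q.support, w ∈ c.support → w = u ∨ w = v) :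
    ∃ (b₁ b₂ : V) (c₁ : G.Walk b₁ b₁) (c₂ : G.Walk b₂ b₂),
      c₁.IsCycle ∧ c₂.IsCycle ∧ c₁.length < c.length ∧ c₂.length < c.length ∧
      {e | e ∈ c.edges} = symmDiff {e | e ∈ c₁.edges} {e | e ∈ c₂.edges} := by
  obtain ⟨A₁, A₂, hA, hlen, hedges, hsupp⟩ := hc.exists_append_of_mem_support hu hv
  have hA₁ : cycDist c u v ≤ A₁.length :=
    cycDist_le_length A₁ fun e he => (hedges e).2 (Or.inl he)
  have hA₂ : cycDist c u v ≤ A₂.length :=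
    dist_comm.trans_le (cycDist_le_length A₂ fun e he => (hedges e).2 (Or.inr he))
  have hQpos : 0 < Q.length := Nat.pos_of_ne_zero fun h0 => by
    obtain rfl := eq_of_length_eq_zero h0
    simp [h0, cycDist] at hQlt
  have hA₁path : A₁.IsPath := hA.isPath_of_append_left (not_nil_iff_lt_length.mpr (by omega))
  have hA₂path : A₂.IsPath := hA.isPath_of_append_right (not_nil_iff_lt_length.mpr (by omega))
  have hc₁ : (A₁.append Q.reverse).IsCycle :=
    hA₁path.isCycle_append_of_internally_disjoint hQ.reverse
      (fun w hw hwQ => hQc w (by simpa using hwQ) ((hsupp w).2 (Or.inl hw))) (Or.inl (by omega))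
  have hc₂ : (Q.append A₂).IsCycle :=
    hQ.isCycle_append_of_internally_disjoint hA₂path
      (fun w hwQ hw => hQc w hwQ ((hsupp w).2 (Or.inr hw))) (Or.inr (by omega))
  have hA₁A₂ := List.disjoint_of_nodup_append (edges_append A₁ A₂ ▸ hA.edges_nodup)
  have hA₁Q : A₁.edges.Disjoint Q.edges := by
    have := List.disjoint_of_nodup_append (edges_append A₁ Q.reverse ▸ hc₁.edges_nodup)
    simpa using this
  have hQA₂ := List.disjoint_of_nodup_append (edges_append Q A₂ ▸ hc₂.edges_nodup)
  refine ⟨u, u, _, _, hc₁, hc₂, by simp; omega, by simp; omega, ?_⟩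
  ext e
  simp only [Set.mem_ofPred_eq, Set.mem_symmDiff, edges_append, edges_reverse, List.mem_append,
    List.mem_reverse, hedges]
  have := @hA₁A₂ e; have := @hA₁Q e; have := @hQA₂ e
  tauto

end SimpleGraph.Walk

theorem shortcut_cycle_is_symmDiff_of_shorter_cycles_general
    {V : Type*} (G : SimpleGraph V)
    {a : V} (c : G.Walk a a) (hc : c.IsCycle)
    (x y : V) (hx : x ∈ c.support) (hy : y ∈ c.support)
    (h : G.dist x y < cycDist c x y) :
    ∃ (b₁ b₂ : V) (c₁ : G.Walk b₁ b₁) (c₂ : G.Walk b₂ b₂),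
      c₁.IsCycle ∧ c₂.IsCycle ∧ c₁.length < c.length ∧ c₂.length < c.length ∧
      {e | e ∈ c.edges} = symmDiff {e | e ∈ c₁.edges} {e | e ∈ c₂.edges} := by
  obtain ⟨u, v, huv, hmin⟩ := IsShortcut.exists_dist_minimal (c := c) ⟨hx, hy, h⟩
  obtain ⟨Q, hQ, hQlen⟩ := huv.reachable.exists_path_of_dist
  exact hc.exists_symmDiff_of_path_lt_cycDist huv.1 huv.2.1 hQ (hQlen ▸ huv.2.2)
    fun w hwQ hwc => huv.eq_or_eq_of_mem_support_of_minimal hmin hQlen hwQ hwc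

/-- If a cycle `C` in a connected graph has two vertices whose distance along `C` exceeds
their distance in `G`, then `C` is the edge-symmetric-difference of two strictly shorter
cycles. -/
theorem shortcut_cycle_is_symmDiff_of_shorter_cycles
    {V : Type*} [Fintype V] (G : SimpleGraph V) (hG : G.Connected)
    {a : V} (c : G.Walk a a) (hc : c.IsCycle)
    (x y : V) (hx : x ∈ c.support) (hy : y ∈ c.support)
    (h : G.dist x y < cycDist c x y) :
    ∃ (b₁ b₂ : V) (c₁ : G.Walk b₁ b₁) (c₂ : G.Walk b₂ b₂),
      c₁.IsCycle ∧ c₂.IsCycle ∧ c₁.length < c.length ∧ c₂.length < c.length ∧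
      {e | e ∈ c.edges} = symmDiff {e | e ∈ c₁.edges} {e | e ∈ c₂.edges} :=
  shortcut_cycle_is_symmDiff_of_shorter_cycles_general G c hc x y hx hy h
end

section
/- Let G be a connected simple graph and C a shortest odd cycle of G, where moreover the girth of G is odd (equal to the length of C). Then C is a fundamental cycle of some BFS tree rooted at a vertex of C: there exist a vertex x on C, a BFS spanning tree T rooted at x, and an edge e of C not in T such that C is the unique cycle in T + e. -/
/-!
Number the vertices of `c` as `v₀ = a, v₁, …, v₂ₙ₊₁ = a`. Since `c` is a closed walk of odd
length equal to the girth, `d(a, vᵢ) = min(i, 2n+1-i)`: a shortcut from `a` to `vᵢ` would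
close up, with one of the two arcs of `c`, an odd closed walk shorter than `c`, and every odd
closed walk contains a cycle no longer than itself. Hence both halves of `c` descend towards
`a`, and a BFS tree rooted at `a` can be chosen to contain them; the middle edge `vₙvₙ₊₁` joins
two vertices at the same distance from `a`, so it is the only edge of `c` outside the tree.
-/

open SimpleGraph

/-- `T` is a breadth-first-search (distance-preserving) spanning tree of `G` rooted at `x`. -/
def IsBFSTree {V : Type*} (G T : SimpleGraph V) (x : V) : Prop :=
  T ≤ G ∧ T.IsTree ∧ ∀ v : V, T.dist x v = G.dist x v

/-- `c` is the fundamental cycle of the non-tree edge `e` with respect to `T`. -/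
def IsFundCycle {V : Type*} (G T : SimpleGraph V) {a : V} (c : G.Walk a a)
    (e : Sym2 V) : Prop :=
  c.IsCycle ∧ e ∈ G.edgeSet ∧ e ∉ T.edgeSet ∧ e ∈ c.edges ∧
    ∀ f ∈ c.edges, f = e ∨ f ∈ T.edgeSet

namespace SimpleGraph

variable {V : Type*} {G : SimpleGraph V}

namespace Walk

theorem isCycle_cons_of_even {u x : V} (h : G.Adj u x) {p : G.Walk x u} (hp : p.IsPath)
    (heven : Even p.length) : (cons h p).IsCycle := by
  refine (cons_isCycle_iff p h).mpr ⟨hp, fun he => ?_⟩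
  have := hp.length_eq_one_of_mem_edges (Sym2.eq_swap ▸ he)
  rw [this] at heven
  exact Nat.not_even_one heven

theorem exists_isPath_of_parity_or_isCycle {u v : V} (w : G.Walk u v) :
    (∃ p : G.Walk u v, p.IsPath ∧ p.length ≤ w.length ∧ p.length % 2 = w.length % 2) ∨
      ∃ (b : V) (q : G.Walk b b), q.IsCycle ∧ q.length ≤ w.length := by
  classical
  induction w with
  | nil => exact .inl ⟨nil, .nil, le_rfl, rfl⟩
  | @cons u x v h w ih =>
    obtain ⟨p, hp, hlen, hpar⟩ | ⟨b, q, hq, hlen⟩ := ih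
    swap
    · exact .inr ⟨b, q, hq, by rw [length_cons]; omega⟩
    by_cases hu : u ∈ p.support
    · have hsplit := congrArg length (p.take_spec hu)
      rw [length_append] at hsplit
      by_cases heven : Even (p.takeUntil u hu).length
      · exact .inr ⟨u, _, isCycle_cons_of_even h (hp.takeUntil hu) heven,
          by rw [length_cons, length_cons]; omega⟩
      · rw [Nat.not_even_iff] at heven
        exact .inl ⟨p.dropUntil u hu, hp.dropUntil hu, by rw [length_cons]; omega,
          by rw [length_cons]; omega⟩
    · exact .inl ⟨cons h p, (cons_isPath_iff h p).mpr ⟨hp, hu⟩,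
        by rw [length_cons, length_cons]; omega, by rw [length_cons, length_cons]; omega⟩

theorem exists_isCycle_length_le_of_odd {u : V} (w : G.Walk u u) (hw : Odd w.length) :
    ∃ (b : V) (q : G.Walk b b), q.IsCycle ∧ q.length ≤ w.length := by
  cases w with
  | nil => simp at hw
  | @cons u x _ h w =>
    rw [length_cons, Nat.odd_add_one, Nat.not_odd_iff] at hw
    obtain ⟨p, hp, hlen, hpar⟩ | ⟨b, q, hq, hlen⟩ := w.exists_isPath_of_parity_or_isCycle
    · exact ⟨u, _, isCycle_cons_of_even h hp (Nat.even_iff.mpr (by omega)),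
        by rw [length_cons, length_cons]; omega⟩
    · exact ⟨b, q, hq, by rw [length_cons]; omega⟩

theorem girth_le_length_of_odd {u : V} (w : G.Walk u u) (hw : Odd w.length) :
    G.girth ≤ w.length := by
  obtain ⟨b, q, hq, hlen⟩ := w.exists_isCycle_length_le_of_odd hw
  exact (girth_le_length hq).trans hlen

theorem dist_getVert_eq_min_of_length_eq_girth {a : V} (c : G.Walk a a) (hodd : Odd c.length)
    (hg : G.girth = c.length) {i : ℕ} (hi : i ≤ c.length) :
    G.dist a (c.getVert i) = min i (c.length - i) := by
  have hto := dist_le (c.take i)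
  have hfrom := dist_le (c.drop i)
  rw [take_length, min_eq_left hi] at hto
  rw [drop_length, dist_comm] at hfrom
  obtain ⟨P, hP⟩ := (c.take i).reachable.exists_walk_length_eq_dist
  refine le_antisymm (le_min hto hfrom) (not_lt.mp fun hlt => ?_)
  rw [Nat.odd_iff] at hodd
  -- the closed walks `c.take i ++ P⁻¹` and `P ++ c.drop i` have lengths of different parity
  rcases Nat.even_or_odd (i + P.length) with heven | hodd'
  · have := (P.append (c.drop i)).girth_le_length_of_odd (by
      rw [length_append, drop_length, Nat.odd_iff]; rw [Nat.even_iff] at heven; omega)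
    rw [length_append, drop_length] at this
    omega
  · have := ((c.take i).append P.reverse).girth_le_length_of_odd (by
      rwa [length_append, length_reverse, take_length, min_eq_left hi])
    rw [length_append, length_reverse, take_length, min_eq_left hi] at this
    omega

end Walk

def parentGraph (r : V) (par : V → V) : SimpleGraph V :=
  fromRel fun u v => u ≠ r ∧ par u = v

section ParentGraph

variable {r : V} {par : V → V}

theorem parentGraph_adj_parent {v : V} (hv : v ≠ r) (hne : par v ≠ v) :
    (parentGraph r par).Adj v (par v) :=
  (fromRel_adj _ _ _).mpr ⟨hne.symm, .inl ⟨hv, rfl⟩⟩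

variable (d : V → ℕ) (hd : ∀ v, v ≠ r → d (par v) < d v)
include hd

theorem exists_walk_parentGraph_length_le (v : V) :
    ∃ p : (parentGraph r par).Walk r v, p.length ≤ d v := by
  induction h : d v using Nat.strong_induction_on generalizing v with
  | _ m ih =>
    by_cases hv : v = r
    · subst hv
      exact ⟨.nil, Nat.zero_le _⟩
    have hlt := hd v hv
    obtain ⟨p, hp⟩ := ih _ (h ▸ hlt) (par v) rfl
    have hadj := parentGraph_adj_parent (par := par) hv fun heq => by rw [heq] at hlt; omega
    exact ⟨p.concat hadj.symm, by rw [Walk.length_concat]; omega⟩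

theorem isAcyclic_parentGraph : (parentGraph r par).IsAcyclic := by
  classical
  intro u c hc
  obtain ⟨m, hm, hmax⟩ := c.support.toFinset.exists_max_image d ⟨u, by simp⟩
  rw [List.mem_toFinset] at hm
  -- a vertex of maximal rank on `c` is the child of both its neighbours on `c`, so they coincide
  have hsub : c.toSubgraph.neighborSet m ⊆ {par m} := by
    intro x hx
    have hxc : x ∈ c.support := (c.mem_verts_toSubgraph).mp hx.snd_mem
    rcases (fromRel_adj _ _ _).mp hx.adj_sub with ⟨-, ⟨-, rfl⟩ | ⟨hxr, hpx⟩⟩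
    · rfl
    · have hlt := hd x hxr
      rw [hpx] at hlt
      have := hmax x (List.mem_toFinset.mpr hxc)
      omega
  have := Set.ncard_le_ncard hsub
  rw [hc.ncard_neighborSet_toSubgraph_eq_two hm, Set.ncard_singleton] at this
  omega

theorem isTree_parentGraph : (parentGraph r par).IsTree :=
  ⟨(connected_iff_exists_forall_reachable _).mpr
      ⟨r, fun v => (exists_walk_parentGraph_length_le d hd v).elim fun p _ => p.reachable⟩,
    isAcyclic_parentGraph d hd⟩

end ParentGraph

def IsBFSParent (G : SimpleGraph V) (r : V) (par : V → V) : Prop :=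
  ∀ v, v ≠ r → G.Adj v (par v) ∧ G.dist r (par v) + 1 = G.dist r v

namespace IsBFSParent

variable {r : V} {par : V → V} (h : IsBFSParent G r par)
include h

theorem dist_parent_lt {v : V} (hv : v ≠ r) : G.dist r (par v) < G.dist r v := by
  have := (h v hv).2
  omega

theorem parentGraph_adj {v : V} (hv : v ≠ r) : (parentGraph r par).Adj v (par v) :=
  parentGraph_adj_parent hv fun heq => by have := h.dist_parent_lt hv; rw [heq] at this; omega

theorem parentGraph_le : parentGraph r par ≤ G := by
  intro u v huv
  rcases (fromRel_adj _ _ _).mp huv with ⟨-, ⟨hu, rfl⟩ | ⟨hv, rfl⟩⟩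
  · exact (h u hu).1
  · exact (h v hv).1.symm

theorem isBFSTree : IsBFSTree G (parentGraph r par) r := by
  refine ⟨h.parentGraph_le, isTree_parentGraph _ fun v => h.dist_parent_lt, fun v => ?_⟩
  obtain ⟨p, hp⟩ := exists_walk_parentGraph_length_le _ (fun v => h.dist_parent_lt) v
  exact le_antisymm ((dist_le p).trans hp) (p.reachable.dist_anti h.parentGraph_le)

theorem dist_ne_of_parentGraph_adj {u v : V} (huv : (parentGraph r par).Adj u v) :
    G.dist r u ≠ G.dist r v := by
  rcases (fromRel_adj _ _ _).mp huv with ⟨-, ⟨hu, rfl⟩ | ⟨hv, rfl⟩⟩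
  · exact (h.dist_parent_lt hu).ne'
  · exact (h.dist_parent_lt hv).ne

end IsBFSParent

namespace Connected

theorem exists_adj_dist_add_one_eq (hG : G.Connected) {r v : V} (hv : v ≠ r) :
    ∃ u, G.Adj v u ∧ G.dist r u + 1 = G.dist r v := by
  obtain ⟨p, hp⟩ := (hG v r).exists_walk_length_eq_dist
  have hnil : ¬p.Nil := fun hn => hv hn.eq
  refine ⟨p.snd, p.adj_snd hnil, le_antisymm ?_ ?_⟩
  · have := dist_le p.tail
    have := p.length_tail_add_one hnil
    rw [dist_comm (v := p.snd), dist_comm (v := v)]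
    omega
  · obtain ⟨q, hq⟩ := (hG r p.snd).exists_walk_length_eq_dist
    have := dist_le (q.concat (p.adj_snd hnil).symm)
    rw [Walk.length_concat, hq] at this
    exact this

theorem exists_isBFSParent_eqOn (hG : G.Connected) (r : V) {s : Set V} {p : V → V}
    (hp : ∀ v ∈ s, G.Adj v (p v) ∧ G.dist r (p v) + 1 = G.dist r v) :
    ∃ par, IsBFSParent G r par ∧ Set.EqOn par p s := by
  classical
  have : ∀ v, ∃ u, v ≠ r → G.Adj v u ∧ G.dist r u + 1 = G.dist r v := fun v =>
    if hv : v = r then ⟨v, fun h => absurd hv h⟩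
    else (hG.exists_adj_dist_add_one_eq hv).imp fun _ h _ => h
  choose q hq using this
  refine ⟨s.piecewise p q, fun v hv => ?_, Set.piecewise_eqOn s p q⟩
  by_cases hs : v ∈ s
  · rw [Set.piecewise_eq_of_mem s p q hs]
    exact hp v hs
  · rw [Set.piecewise_eq_of_notMem s p q hs]
    exact hq v hv

end Connected

theorem exists_isBFSParent_along_cycle (hG : G.Connected) {a : V} {c : G.Walk a a}
    (hc : c.IsCycle) {n : ℕ} (hlen : c.length = 2 * n + 1)
    (hdist : ∀ i ≤ 2 * n + 1, G.dist a (c.getVert i) = min i (2 * n + 1 - i)) :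
    ∃ par, IsBFSParent G a par ∧
      ∀ i < 2 * n + 1, i ≠ n → (parentGraph a par).Adj (c.getVert i) (c.getVert (i + 1)) := by
  let K := Set.Icc 1 (2 * n)
  have hinj : Set.InjOn c.getVert K :=
    hc.getVert_injOn.mono fun k (hk : k ∈ K) =>
      (⟨hk.1, by rw [hlen]; exact hk.2.trans (by omega)⟩ : 1 ≤ k ∧ k ≤ c.length)
  have hne : ∀ k ∈ K, c.getVert k ≠ a := by
    rintro k ⟨hk1, hk2⟩ heq
    have := hdist k (by omega)
    rw [heq, dist_self] at this
    omega
  -- the neighbour of `vₖ` on `c` that is closer to `a`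
  let down : ℕ → ℕ := fun k => if k ≤ n then k - 1 else k + 1
  have hdown : ∀ k ∈ K, G.Adj (c.getVert k) (c.getVert (down k)) ∧
      G.dist a (c.getVert (down k)) + 1 = G.dist a (c.getVert k) := by
    rintro k ⟨hk1, hk2⟩
    by_cases hkn : k ≤ n
    · have hadj := c.adj_getVert_succ (i := k - 1) (by omega)
      rw [Nat.sub_add_cancel hk1] at hadj
      simp only [down, if_pos hkn]
      exact ⟨hadj.symm, by rw [hdist _ (by omega), hdist _ (by omega)]; omega⟩
    · simp only [down, if_neg hkn]
      exact ⟨c.adj_getVert_succ (by omega),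
        by rw [hdist _ (by omega), hdist _ (by omega)]; omega⟩
  obtain ⟨par, hpar, heq⟩ := hG.exists_isBFSParent_eqOn a (s := c.getVert '' K)
    (p := fun v => c.getVert (down (Function.invFunOn c.getVert K v)))
    (by rintro _ ⟨k, hk, rfl⟩; rw [hinj.leftInvOn_invFunOn hk]; exact hdown k hk)
  have hadj : ∀ k ∈ K, (parentGraph a par).Adj (c.getVert k) (c.getVert (down k)) :=
    fun k hk => by
      have := hpar.parentGraph_adj (hne k hk)
      simpa only [heq (Set.mem_image_of_mem _ hk), hinj.leftInvOn_invFunOn hk] using this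
  refine ⟨par, hpar, fun i hi hin => ?_⟩
  rcases hin.lt_or_gt with hin | hin
  · have := hadj (i + 1) ⟨by omega, by omega⟩
    simp only [down, if_pos (show i + 1 ≤ n by omega), Nat.add_sub_cancel] at this
    exact this.symm
  · have := hadj i ⟨by omega, by omega⟩
    simpa only [down, if_neg (show ¬i ≤ n by omega)] using this

end SimpleGraph

theorem shortest_odd_cycle_is_fundamental_at_cycle_vertex_general
    {V : Type*} (G : SimpleGraph V) (hG : G.Connected)
    (n : ℕ) (hg : G.girth = 2 * n + 1)
    {a : V} (c : G.Walk a a) (hc : c.IsCycle) (hlen : c.length = 2 * n + 1) :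
    ∃ x ∈ c.support, ∃ T : SimpleGraph V, IsBFSTree G T x ∧
      ∃ e : Sym2 V, IsFundCycle G T c e := by
  have hdist : ∀ i ≤ 2 * n + 1, G.dist a (c.getVert i) = min i (2 * n + 1 - i) := fun i hi => by
    rw [c.dist_getVert_eq_min_of_length_eq_girth (by rw [hlen]; exact odd_two_mul_add_one n)
      (hg.trans hlen.symm) (hlen ▸ hi), hlen]
  obtain ⟨par, hpar, hadj⟩ := exists_isBFSParent_along_cycle hG hc hlen hdist
  refine ⟨a, c.start_mem_support, parentGraph a par, hpar.isBFSTree,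
    s(c.getVert n, c.getVert (n + 1)), hc, c.adj_getVert_succ (by omega),
    fun he => hpar.dist_ne_of_parentGraph_adj he ?_,
    c.mk_mem_edges_iff_exists.mpr ⟨n, by omega, rfl⟩, ?_⟩
  · rw [hdist n (by omega), hdist (n + 1) (by omega)]
    omega
  refine Sym2.ind fun u v hf => ?_
  obtain ⟨i, hi, he⟩ := c.mk_mem_edges_iff_exists.mp hf
  rw [← he]
  by_cases hin : i = n
  · exact .inl (by rw [hin])
  · exact .inr (hadj i (hlen ▸ hi) hin)

/-- In a connected graph of odd girth `2n+1`, every cycle of length `2n+1` is a fundamental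
cycle of some BFS tree rooted at a vertex of the cycle. -/
theorem shortest_odd_cycle_is_fundamental_at_cycle_vertex
    {V : Type*} [Fintype V] (G : SimpleGraph V) (hG : G.Connected)
    (n : ℕ) (hg : G.girth = 2 * n + 1)
    {a : V} (c : G.Walk a a) (hc : c.IsCycle) (hlen : c.length = 2 * n + 1) :
    ∃ x ∈ c.support, ∃ T : SimpleGraph V, IsBFSTree G T x ∧
      ∃ e : Sym2 V, IsFundCycle G T c e :=
  shortest_odd_cycle_is_fundamental_at_cycle_vertex_general G hG n hg c hc hlen
end
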